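/- arXiv:1909.04483 — 3 statements merged into one kernel-verified Lean document; each statement's English description precedes it below -/
import Mathlib

section
/- Let X be a length space, let I ⊆ ℝ be a nondegenerate interval, and let f : I → ℝ be continuous with 0 < f_min ≤ f(t) ≤ f_max < ∞ for all t ∈ I. Then the null distance d̂_f of the warped product I ×_f X is a metric on I × X, and (I × X, d̂_f) is a length space; in particular d̂_f has the approximate midpoint property: for all p, q ∈ I × X and ε > 0 there exists m ∈ I × X with max(d̂_f(p,m), d̂_f(m,q)) ≤ d̂_f(p,q)/2 + ε. (Instance, for warped product spacetimes, of the theorem that the null distance of a locally anti-Lipschitz time function is an intrinsic metric making the spacetime a length space.) -/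
/-!
Every piecewise causal chain from `p` to `q` has null length at least `|t(q) - t(p)|` and,
since `f ≥ fmin` makes each causal step `(s,x) ≼ (t,y)` satisfy `fmin · d(x,y) ≤ t - s`, at
least `fmin · d(x,y)`; this gives definiteness. Reversing and concatenating chains gives
symmetry and the triangle inequality, and any two points are joined by a chain that zigzags
between two fixed times of `I` along a fine chain of `X`.

For approximate midpoints, cut a nearly optimal chain at half its null length. The cut falls
inside one causal segment `(s,x) ≼ (t,y)`, which is split at the intermediate time `s + θ`
using a point `z` with `d(x,z) ≤ ∫_s^{s+θ} 1/f` and `d(z,y)` at most `∫_{s+θ}^t 1/f` plus a small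
error; a short vertical detour, whose cost is controlled by `f ≤ fmax`, absorbs the error.
-/

open MeasureTheory

/-- Causal relation of the warped product `I ×_f X`: `(s,x) ≼_f (t,y)` iff `s ≤ t` and
`d(x,y) ≤ ∫_s^t f(u)⁻¹ du`. -/
def WPCausal {X : Type*} [MetricSpace X] (f : ℝ → ℝ) (p q : ℝ × X) : Prop :=
  p.1 ≤ q.1 ∧
    ENNReal.ofReal (dist p.2 q.2) ≤ ∫⁻ u in Set.Ioc p.1 q.1, ENNReal.ofReal ((f u)⁻¹)

/-- `σ` is a piecewise causal chain with `n+1` segments from `p` to `q` inside `I × X`. -/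
def WPChain {X : Type*} [MetricSpace X] (I : Set ℝ) (f : ℝ → ℝ) (p q : ℝ × X) (n : ℕ)
    (σ : ℕ → ℝ × X) : Prop :=
  σ 0 = p ∧ σ (n + 1) = q ∧ (∀ i ≤ n + 1, (σ i).1 ∈ I) ∧
    ∀ i ≤ n, WPCausal f (σ i) (σ (i + 1)) ∨ WPCausal f (σ (i + 1)) (σ i)

/-- The null distance of the warped product `I ×_f X`: the infimum of the null lengths
`Σᵢ |t(pᵢ) − t(p_{i−1})|` of piecewise causal chains from `p` to `q`. -/
noncomputable def nullDist {X : Type*} [MetricSpace X] (I : Set ℝ) (f : ℝ → ℝ)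
    (p q : ℝ × X) : ℝ :=
  sInf { r | ∃ n σ, WPChain I f p q n σ ∧
    r = ∑ i ∈ Finset.range (n + 1), |(σ (i + 1)).1 - (σ i).1| }

def HasApproxMidpoints (X : Type*) [PseudoMetricSpace X] : Prop :=
  ∀ x y : X, ∀ ε : ℝ, 0 < ε → ∃ z : X, max (dist x z) (dist z y) ≤ dist x y / 2 + ε

theorem exists_le_le_succ {α : Type*} [LinearOrder α] {g : ℕ → α} {s : α} {N : ℕ}
    (h0 : g 0 ≤ s) (hN : s ≤ g (N + 1)) : ∃ j ≤ N, g j ≤ s ∧ s ≤ g (j + 1) := by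
  induction N with
  | zero => exact ⟨0, le_rfl, h0, hN⟩
  | succ N ih =>
    by_cases hs : g (N + 1) ≤ s
    · exact ⟨N + 1, le_rfl, hs, hN⟩
    · obtain ⟨j, hj, hgj⟩ := ih (not_le.mp hs).le
      exact ⟨j, hj.trans N.le_succ, hgj⟩

section SeqAppend

variable {α : Type*}

def seqAppend (σ τ : ℕ → α) (n : ℕ) (i : ℕ) : α :=
  if i ≤ n then σ i else τ (i - n)

variable {σ τ : ℕ → α} {n : ℕ}

theorem seqAppend_of_le {i : ℕ} (hi : i ≤ n) : seqAppend σ τ n i = σ i := if_pos hi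

theorem seqAppend_add (h : σ n = τ 0) (j : ℕ) : seqAppend σ τ n (n + j) = τ j := by
  rcases j.eq_zero_or_pos with rfl | hj
  · simp [seqAppend, h]
  · simp [seqAppend, show ¬ n + j ≤ n by omega]

theorem seqAppend_steps {P : α → α → Prop} {m : ℕ} (h : σ n = τ 0)
    (hσ : ∀ i < n, P (σ i) (σ (i + 1))) (hτ : ∀ j < m, P (τ j) (τ (j + 1))) :
    ∀ i < n + m, P (seqAppend σ τ n i) (seqAppend σ τ n (i + 1)) := by
  intro i hi
  rcases lt_or_ge i n with hin | hin
  · rw [seqAppend_of_le hin.le, seqAppend_of_le hin]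
    exact hσ i hin
  · obtain ⟨j, rfl⟩ := Nat.exists_eq_add_of_le hin
    rw [seqAppend_add h, add_assoc, seqAppend_add h]
    exact hτ j (by omega)

end SeqAppend

namespace HasApproxMidpoints

variable {X : Type*} [PseudoMetricSpace X]

theorem exists_dyadic_chain (hX : HasApproxMidpoints X) (k : ℕ) (x y : X) {ε : ℝ}
    (hε : 0 < ε) : ∃ z : ℕ → X, z 0 = x ∧ z (2 ^ k) = y ∧
      ∀ i < 2 ^ k, dist (z i) (z (i + 1)) ≤ dist x y / 2 ^ k + ε := by
  induction k generalizing x y ε with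
  | zero =>
    refine ⟨fun i => if i = 0 then x else y, rfl, rfl, fun i hi => ?_⟩
    obtain rfl : i = 0 := by simpa using hi
    simpa using hε.le
  | succ k ih =>
    obtain ⟨c, hc⟩ := hX x y (ε / 2) (half_pos hε)
    obtain ⟨z₁, hz₁0, hz₁e, hz₁⟩ := ih x c (half_pos hε)
    obtain ⟨z₂, rfl, hz₂e, hz₂⟩ := ih c y (half_pos hε)
    have hhalf : ∀ d : ℝ, d ≤ dist x y / 2 + ε / 2 →
        d / 2 ^ k + ε / 2 ≤ dist x y / 2 ^ (k + 1) + ε := by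
      intro d hd
      have : d / 2 ^ k ≤ dist x y / 2 ^ (k + 1) + ε / 2 / 2 ^ k := by
        calc d / 2 ^ k ≤ (dist x y / 2 + ε / 2) / 2 ^ k := by gcongr
          _ = dist x y / 2 ^ (k + 1) + ε / 2 / 2 ^ k := by rw [pow_succ]; ring
      linarith [div_le_self (half_pos hε).le (one_le_pow₀ one_le_two : (1 : ℝ) ≤ 2 ^ k)]
    refine ⟨seqAppend z₁ z₂ (2 ^ k), by rw [seqAppend_of_le (Nat.zero_le _), hz₁0], ?_, ?_⟩
    · rw [pow_succ, mul_two, seqAppend_add hz₁e, hz₂e]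
    · rw [pow_succ, mul_two]
      exact seqAppend_steps (P := fun a b => dist a b ≤ dist x y / 2 ^ (k + 1) + ε) hz₁e
        (fun i hi => (hz₁ i hi).trans (hhalf _ ((le_max_left _ _).trans hc)))
        (fun j hj => (hz₂ j hj).trans (hhalf _ ((le_max_right _ _).trans hc)))

theorem exists_fine_chain (hX : HasApproxMidpoints X) (x y : X) {δ : ℝ} (hδ : 0 < δ) :
    ∃ (N : ℕ) (z : ℕ → X), z 0 = x ∧ z N = y ∧ (∀ i < N, dist (z i) (z (i + 1)) ≤ δ) ∧
      ∑ i ∈ Finset.range N, dist (z i) (z (i + 1)) ≤ dist x y + δ := by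
  obtain ⟨k, hk⟩ := pow_unbounded_of_one_lt (2 * dist x y / δ) one_lt_two
  have h2k : (0 : ℝ) < 2 ^ k := by positivity
  have hdk : dist x y / 2 ^ k ≤ δ / 2 := by
    rw [div_lt_iff₀ hδ] at hk
    rw [div_le_iff₀ h2k]
    linarith
  obtain ⟨z, hz0, hze, hz⟩ := hX.exists_dyadic_chain k x y (ε := δ / 2 ^ (k + 1)) (by positivity)
  have hε : δ / 2 ^ (k + 1) ≤ δ / 2 := by
    gcongr
    exact le_self_pow₀ one_le_two k.succ_ne_zero
  refine ⟨2 ^ k, z, hz0, hze, fun i hi => by linarith [hz i hi], ?_⟩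
  calc ∑ i ∈ Finset.range (2 ^ k), dist (z i) (z (i + 1))
      ≤ ∑ _i ∈ Finset.range (2 ^ k), (dist x y / 2 ^ k + δ / 2 ^ (k + 1)) :=
        Finset.sum_le_sum fun i hi => hz i (Finset.mem_range.mp hi)
    _ = dist x y + δ / 2 := by
        rw [Finset.sum_const, Finset.card_range, nsmul_eq_mul, pow_succ]
        push_cast
        field_simp
    _ ≤ dist x y + δ := by linarith

theorem exists_dist_le_of_dist_le_add (hX : HasApproxMidpoints X) {x y : X} {A B η : ℝ}
    (hA : 0 ≤ A) (hB : 0 ≤ B) (hxy : dist x y ≤ A + B) (hη : 0 < η) :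
    ∃ z, dist x z ≤ A ∧ dist z y ≤ B + η := by
  obtain ⟨N, z, rfl, rfl, hstep, hsum⟩ := hX.exists_fine_chain x y (half_pos hη)
  set g : ℕ → ℝ := fun j => ∑ i ∈ Finset.range j, dist (z i) (z (i + 1))
  by_cases hgN : g N ≤ A
  · exact ⟨z N, (dist_le_range_sum_dist z N).trans hgN, by simp; linarith⟩
  obtain ⟨N, rfl⟩ : ∃ M, N = M + 1 :=
    Nat.exists_eq_succ_of_ne_zero fun h => hgN (by simp [g, h, hA])
  obtain ⟨j, hj, hgj, hgj1⟩ := exists_le_le_succ (g := g) (by simpa [g] using hA) (not_le.mp hgN).le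
  have hsucc : g (j + 1) = g j + dist (z j) (z (j + 1)) := Finset.sum_range_succ _ _
  have hrest : dist (z j) (z (N + 1)) ≤ g (N + 1) - g j := by
    simp only [g]
    rw [← Finset.sum_range_add_sum_Ico _ (by omega : j ≤ N + 1), add_sub_cancel_left]
    exact dist_le_Ico_sum_dist z (by omega)
  refine ⟨z j, (dist_le_range_sum_dist z j).trans hgj, ?_⟩
  linarith [hstep j (by omega)]

end HasApproxMidpoints

section WarpedTime

variable {I : Set ℝ} {f : ℝ → ℝ} {fmin fmax c d : ℝ}

noncomputable def warpedTime (f : ℝ → ℝ) (c d : ℝ) : ℝ :=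
  (∫⁻ u in Set.Ioc c d, ENNReal.ofReal (f u)⁻¹).toReal

theorem lintegral_inv_le (hmin : 0 < fmin) (hlow : ∀ t ∈ I, fmin ≤ f t)
    (h : Set.Ioc c d ⊆ I) :
    ∫⁻ u in Set.Ioc c d, ENNReal.ofReal (f u)⁻¹ ≤ ENNReal.ofReal (fmin⁻¹ * (d - c)) := by
  calc ∫⁻ u in Set.Ioc c d, ENNReal.ofReal (f u)⁻¹
      ≤ ∫⁻ _ in Set.Ioc c d, ENNReal.ofReal fmin⁻¹ :=
        setLIntegral_mono' measurableSet_Ioc fun u hu =>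
          ENNReal.ofReal_le_ofReal (inv_anti₀ hmin (hlow u (h hu)))
    _ = ENNReal.ofReal (fmin⁻¹ * (d - c)) := by
        rw [setLIntegral_const, Real.volume_Ioc, ENNReal.ofReal_mul (by positivity)]

theorem lintegral_inv_ne_top (hmin : 0 < fmin) (hlow : ∀ t ∈ I, fmin ≤ f t)
    (h : Set.Ioc c d ⊆ I) : ∫⁻ u in Set.Ioc c d, ENNReal.ofReal (f u)⁻¹ ≠ ⊤ :=
  ne_top_of_le_ne_top ENNReal.ofReal_ne_top (lintegral_inv_le hmin hlow h)

theorem ofReal_warpedTime (hmin : 0 < fmin) (hlow : ∀ t ∈ I, fmin ≤ f t)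
    (h : Set.Ioc c d ⊆ I) :
    ENNReal.ofReal (warpedTime f c d) = ∫⁻ u in Set.Ioc c d, ENNReal.ofReal (f u)⁻¹ :=
  ENNReal.ofReal_toReal (lintegral_inv_ne_top hmin hlow h)

theorem warpedTime_le (hmin : 0 < fmin) (hlow : ∀ t ∈ I, fmin ≤ f t) (hcd : c ≤ d)
    (h : Set.Ioc c d ⊆ I) : warpedTime f c d ≤ fmin⁻¹ * (d - c) :=
  ENNReal.toReal_le_of_le_ofReal (by have := sub_nonneg.mpr hcd; positivity)
    (lintegral_inv_le hmin hlow h)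

theorem le_warpedTime (hmin : 0 < fmin) (hbd : ∀ t ∈ I, fmin ≤ f t ∧ f t ≤ fmax) (hcd : c ≤ d)
    (h : Set.Ioc c d ⊆ I) : fmax⁻¹ * (d - c) ≤ warpedTime f c d := by
  rw [warpedTime, ← ENNReal.ofReal_le_iff_le_toReal
    (lintegral_inv_ne_top hmin (fun t ht => (hbd t ht).1) h)]
  calc ENNReal.ofReal (fmax⁻¹ * (d - c))
      = ∫⁻ _ in Set.Ioc c d, ENNReal.ofReal fmax⁻¹ := by
        rw [setLIntegral_const, Real.volume_Ioc, ENNReal.ofReal_mul' (sub_nonneg.mpr hcd)]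
    _ ≤ ∫⁻ u in Set.Ioc c d, ENNReal.ofReal (f u)⁻¹ :=
        setLIntegral_mono' measurableSet_Ioc fun u hu =>
          ENNReal.ofReal_le_ofReal <|
            inv_anti₀ (hmin.trans_le (hbd u (h hu)).1) (hbd u (h hu)).2

theorem warpedTime_add (hmin : 0 < fmin) (hlow : ∀ t ∈ I, fmin ≤ f t) {e : ℝ} (hce : c ≤ e)
    (hed : e ≤ d) (h : Set.Ioc c d ⊆ I) :
    warpedTime f c d = warpedTime f c e + warpedTime f e d := by
  rw [warpedTime, ← Set.Ioc_union_Ioc_eq_Ioc hce hed,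
    lintegral_union measurableSet_Ioc (Set.Ioc_disjoint_Ioc_of_le le_rfl),
    ENNReal.toReal_add
      (lintegral_inv_ne_top hmin hlow ((Set.Ioc_subset_Ioc_right hed).trans h))
      (lintegral_inv_ne_top hmin hlow ((Set.Ioc_subset_Ioc_left hce).trans h)),
    warpedTime, warpedTime]

end WarpedTime

section NullDistance

variable {X : Type*} [MetricSpace X] {I : Set ℝ} {f : ℝ → ℝ} {fmin fmax : ℝ}

theorem wpCausal_iff (hmin : 0 < fmin) (hlow : ∀ t ∈ I, fmin ≤ f t) {p q : ℝ × X}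
    (h : Set.Ioc p.1 q.1 ⊆ I) :
    WPCausal f p q ↔ p.1 ≤ q.1 ∧ dist p.2 q.2 ≤ warpedTime f p.1 q.1 := by
  rw [WPCausal, ← ofReal_warpedTime hmin hlow h]
  exact and_congr_right' (ENNReal.ofReal_le_ofReal_iff ENNReal.toReal_nonneg)

theorem WPCausal.mul_dist_le (hIc : I.OrdConnected) (hmin : 0 < fmin)
    (hlow : ∀ t ∈ I, fmin ≤ f t) {p q : ℝ × X} (hp : p.1 ∈ I) (hq : q.1 ∈ I)
    (hpq : WPCausal f p q) : fmin * dist p.2 q.2 ≤ q.1 - p.1 := by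
  have hsub : Set.Ioc p.1 q.1 ⊆ I := Set.Ioc_subset_Icc_self.trans (hIc.out hp hq)
  have hdist := ((wpCausal_iff hmin hlow hsub).mp hpq).2.trans
    (warpedTime_le hmin hlow hpq.1 hsub)
  rwa [← le_div_iff₀' hmin, div_eq_inv_mul]

def nullLengths (I : Set ℝ) (f : ℝ → ℝ) (p q : ℝ × X) : Set ℝ :=
  { r | ∃ n σ, WPChain I f p q n σ ∧
    r = ∑ i ∈ Finset.range (n + 1), |(σ (i + 1)).1 - (σ i).1| }

theorem nullDist_eq_sInf (p q : ℝ × X) : nullDist I f p q = sInf (nullLengths I f p q) := rfl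

theorem nonneg_of_mem_nullLengths {p q : ℝ × X} {r : ℝ} (hr : r ∈ nullLengths I f p q) :
    0 ≤ r := by
  obtain ⟨n, σ, -, rfl⟩ := hr
  exact Finset.sum_nonneg fun i _ => abs_nonneg _

theorem nullDist_nonneg (p q : ℝ × X) : 0 ≤ nullDist I f p q :=
  Real.sInf_nonneg fun _ => nonneg_of_mem_nullLengths

theorem nullDist_le_of_mem {p q : ℝ × X} {r : ℝ} (hr : r ∈ nullLengths I f p q) :
    nullDist I f p q ≤ r :=
  csInf_le ⟨0, fun _ => nonneg_of_mem_nullLengths⟩ hr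

theorem abs_sub_mem_nullLengths {p q : ℝ × X} (hp : p.1 ∈ I) (hq : q.1 ∈ I)
    (hpq : WPCausal f p q ∨ WPCausal f q p) : |q.1 - p.1| ∈ nullLengths I f p q := by
  refine ⟨0, fun i => if i = 0 then p else q, ⟨rfl, rfl, fun i _ => ?_, fun i hi => ?_⟩, by simp⟩
  · dsimp only
    split_ifs
    exacts [hp, hq]
  · obtain rfl : i = 0 := Nat.le_zero.mp hi
    simpa using hpq

theorem abs_sub_mem_nullLengths_of_snd_eq {s t : ℝ} (hs : s ∈ I) (ht : t ∈ I) (x : X) :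
    |t - s| ∈ nullLengths I f (s, x) (t, x) := by
  refine abs_sub_mem_nullLengths hs ht ?_
  rcases le_total s t with hst | hts
  · exact Or.inl ⟨hst, by simp⟩
  · exact Or.inr ⟨hts, by simp⟩

theorem nullDist_le_abs_sub {p q : ℝ × X} (hp : p.1 ∈ I) (hq : q.1 ∈ I)
    (hpq : WPCausal f p q ∨ WPCausal f q p) : nullDist I f p q ≤ |q.1 - p.1| :=
  nullDist_le_of_mem (abs_sub_mem_nullLengths hp hq hpq)

theorem nullDist_self {p : ℝ × X} (hp : p.1 ∈ I) : nullDist I f p p = 0 :=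
  le_antisymm (by simpa using nullDist_le_abs_sub (f := f) hp hp (Or.inl ⟨le_rfl, by simp⟩))
    (nullDist_nonneg p p)

theorem add_mem_nullLengths {p q r : ℝ × X} {r₁ r₂ : ℝ} (h₁ : r₁ ∈ nullLengths I f p q)
    (h₂ : r₂ ∈ nullLengths I f q r) : r₁ + r₂ ∈ nullLengths I f p r := by
  obtain ⟨n, σ, ⟨hσ0, hσe, hσI, hσc⟩, rfl⟩ := h₁
  obtain ⟨m, τ, ⟨hτ0, hτe, hτI, hτc⟩, rfl⟩ := h₂
  have hστ : σ (n + 1) = τ 0 := hσe.trans hτ0.symm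
  have hlen : n + 1 + m + 1 = n + 1 + (m + 1) := by omega
  refine ⟨n + 1 + m, seqAppend σ τ (n + 1), ⟨?_, ?_, fun i hi => ?_, fun i hi => ?_⟩, ?_⟩
  · rw [seqAppend_of_le (Nat.zero_le _), hσ0]
  · rw [hlen, seqAppend_add hστ, hτe]
  · rcases le_or_gt i (n + 1) with hin | hin
    · rw [seqAppend_of_le hin]
      exact hσI i hin
    · obtain ⟨j, rfl⟩ := Nat.exists_eq_add_of_le hin.le
      rw [seqAppend_add hστ]
      exact hτI j (by omega)
  · exact seqAppend_steps (P := fun a b => WPCausal f a b ∨ WPCausal f b a) (m := m + 1) hστ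
      (fun i hi => hσc i (by omega)) (fun j hj => hτc j (by omega)) i (by omega)
  · rw [hlen, Finset.sum_range_add _ (n + 1) (m + 1)]
    congr 1
    · refine Finset.sum_congr rfl fun i hi => ?_
      have hi := Finset.mem_range.mp hi
      rw [seqAppend_of_le (by omega), seqAppend_of_le (by omega)]
    · refine Finset.sum_congr rfl fun j _ => ?_
      rw [add_assoc, seqAppend_add hστ, seqAppend_add hστ]

theorem mem_nullLengths_comm {p q : ℝ × X} {r : ℝ} (h : r ∈ nullLengths I f p q) :
    r ∈ nullLengths I f q p := by
  obtain ⟨n, σ, ⟨hσ0, hσe, hσI, hσc⟩, rfl⟩ := h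
  refine ⟨n, fun i => σ (n + 1 - i), ⟨by simpa using hσe, by simpa using hσ0,
    fun i _ => hσI _ (by omega), fun i hi => ?_⟩, ?_⟩
  · dsimp only
    rw [show n + 1 - i = n - i + 1 by omega, show n + 1 - (i + 1) = n - i by omega]
    exact (hσc (n - i) (by omega)).symm
  · rw [← Finset.sum_range_reflect]
    refine Finset.sum_congr rfl fun i hi => ?_
    have hi := Finset.mem_range.mp hi
    rw [show n + 1 - 1 - i + 1 = n + 1 - i by omega, show n + 1 - 1 - i = n + 1 - (i + 1) by omega,
      abs_sub_comm]

theorem nullDist_comm (p q : ℝ × X) : nullDist I f p q = nullDist I f q p := by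
  simp only [nullDist_eq_sInf]
  congr 1
  ext r
  exact ⟨mem_nullLengths_comm, mem_nullLengths_comm⟩

theorem nullDist_triangle {p q r : ℝ × X} (h₁ : (nullLengths I f p q).Nonempty)
    (h₂ : (nullLengths I f q r).Nonempty) :
    nullDist I f p r ≤ nullDist I f p q + nullDist I f q r := by
  refine le_of_forall_pos_le_add fun ε hε => ?_
  obtain ⟨r₁, hr₁, hr₁ε⟩ := Real.lt_sInf_add_pos h₁ (half_pos hε)
  obtain ⟨r₂, hr₂, hr₂ε⟩ := Real.lt_sInf_add_pos h₂ (half_pos hε)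
  have := nullDist_le_of_mem (add_mem_nullLengths hr₁ hr₂)
  rw [nullDist_eq_sInf p q, nullDist_eq_sInf q r]
  linarith

theorem abs_sub_le_of_mem_nullLengths {p q : ℝ × X} {r : ℝ} (hr : r ∈ nullLengths I f p q) :
    |q.1 - p.1| ≤ r := by
  obtain ⟨n, σ, ⟨rfl, rfl, -, -⟩, rfl⟩ := hr
  simpa only [Real.dist_eq, abs_sub_comm] using dist_le_range_sum_dist (fun i => (σ i).1) (n + 1)

theorem mul_dist_le_of_mem_nullLengths (hIc : I.OrdConnected) (hmin : 0 < fmin)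
    (hlow : ∀ t ∈ I, fmin ≤ f t) {p q : ℝ × X} {r : ℝ} (hr : r ∈ nullLengths I f p q) :
    fmin * dist p.2 q.2 ≤ r := by
  obtain ⟨n, σ, ⟨rfl, rfl, hσI, hσc⟩, rfl⟩ := hr
  calc fmin * dist (σ 0).2 (σ (n + 1)).2
      ≤ fmin * ∑ i ∈ Finset.range (n + 1), dist (σ i).2 (σ (i + 1)).2 :=
        mul_le_mul_of_nonneg_left (dist_le_range_sum_dist (fun i => (σ i).2) (n + 1)) hmin.le
    _ = ∑ i ∈ Finset.range (n + 1), fmin * dist (σ i).2 (σ (i + 1)).2 := Finset.mul_sum _ _ _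
    _ ≤ ∑ i ∈ Finset.range (n + 1), |(σ (i + 1)).1 - (σ i).1| := by
        refine Finset.sum_le_sum fun i hi => ?_
        have hi := Finset.mem_range.mp hi
        rcases hσc i (by omega) with hc | hc
        · exact (hc.mul_dist_le hIc hmin hlow (hσI i (by omega)) (hσI _ (by omega))).trans
            (le_abs_self _)
        · rw [dist_comm, abs_sub_comm]
          exact (hc.mul_dist_le hIc hmin hlow (hσI _ (by omega)) (hσI i (by omega))).trans
            (le_abs_self _)

theorem eq_of_nullDist_eq_zero (hIc : I.OrdConnected) (hmin : 0 < fmin)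
    (hlow : ∀ t ∈ I, fmin ≤ f t) {p q : ℝ × X} (hne : (nullLengths I f p q).Nonempty)
    (h : nullDist I f p q = 0) : p = q := by
  have htime : |q.1 - p.1| ≤ 0 := h ▸ le_csInf hne fun _ => abs_sub_le_of_mem_nullLengths
  have hspace : fmin * dist p.2 q.2 ≤ 0 :=
    h ▸ le_csInf hne fun _ => mul_dist_le_of_mem_nullLengths hIc hmin hlow
  refine Prod.ext ?_ (dist_le_zero.mp ?_)
  · linarith [abs_nonpos_iff.mp htime]
  · nlinarith [dist_nonneg (x := p.2) (y := q.2)]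

end NullDistance

section LengthSpace

variable {X : Type*} [MetricSpace X] {I : Set ℝ} {f : ℝ → ℝ} {fmin fmax : ℝ}

theorem nullLengths_nonempty (hX : HasApproxMidpoints X) (hIc : I.OrdConnected)
    (hInd : ∃ a ∈ I, ∃ b ∈ I, a < b) (hmin : 0 < fmin)
    (hbd : ∀ t ∈ I, fmin ≤ f t ∧ f t ≤ fmax) {p q : ℝ × X} (hp : p.1 ∈ I) (hq : q.1 ∈ I) :
    (nullLengths I f p q).Nonempty := by
  obtain ⟨a, ha, b, hb, hab⟩ := hInd
  obtain ⟨s, x⟩ := p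
  obtain ⟨t, y⟩ := q
  have hlow : ∀ t ∈ I, fmin ≤ f t := fun t ht => (hbd t ht).1
  have hfmax : 0 < fmax := hmin.trans_le ((hbd a ha).1.trans (hbd a ha).2)
  have hsub : Set.Ioc a b ⊆ I := Set.Ioc_subset_Icc_self.trans (hIc.out ha hb)
  have hδ : 0 < fmax⁻¹ * (b - a) := mul_pos (inv_pos.mpr hfmax) (sub_pos.mpr hab)
  have hzigzag : ∀ w w' : X, dist w w' ≤ fmax⁻¹ * (b - a) →
      (nullLengths I f (a, w) (a, w')).Nonempty := by
    intro w w' hww'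
    have hup : WPCausal f (a, w) (b, w') := (wpCausal_iff hmin hlow hsub).mpr
      ⟨hab.le, hww'.trans (le_warpedTime hmin hbd hab.le hsub)⟩
    exact ⟨_, add_mem_nullLengths (abs_sub_mem_nullLengths ha hb (Or.inl hup))
      (abs_sub_mem_nullLengths_of_snd_eq hb ha w')⟩
  obtain ⟨N, z, rfl, rfl, hstep, -⟩ := hX.exists_fine_chain x y hδ
  have hwalk : ∀ M ≤ N, (nullLengths I f (a, z 0) (a, z M)).Nonempty := by
    intro M hM
    induction M with
    | zero => exact ⟨_, abs_sub_mem_nullLengths_of_snd_eq ha ha (z 0)⟩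
    | succ M ih =>
      obtain ⟨r₁, hr₁⟩ := ih (by omega)
      obtain ⟨r₂, hr₂⟩ := hzigzag _ _ (hstep M (by omega))
      exact ⟨_, add_mem_nullLengths hr₁ hr₂⟩
  obtain ⟨r, hr⟩ := hwalk N le_rfl
  exact ⟨_, add_mem_nullLengths (add_mem_nullLengths
    (abs_sub_mem_nullLengths_of_snd_eq hp ha (z 0)) hr) (abs_sub_mem_nullLengths_of_snd_eq ha hq _)⟩

theorem exists_wpCausal_wpCausal (hX : HasApproxMidpoints X) (hIc : I.OrdConnected)
    (hmin : 0 < fmin) (hbd : ∀ t ∈ I, fmin ≤ f t ∧ f t ≤ fmax) {s t c' c : ℝ} {x y : X}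
    (hs : s ∈ I) (ht : t ∈ I) (hsc' : s ≤ c') (hc'c : c' < c) (hct : c ≤ t)
    (hxy : WPCausal f (s, x) (t, y)) :
    ∃ z : X, WPCausal f (s, x) (c, z) ∧ WPCausal f (c', z) (t, y) := by
  have hlow : ∀ t ∈ I, fmin ≤ f t := fun t ht => (hbd t ht).1
  have hfmax : 0 < fmax := hmin.trans_le ((hbd s hs).1.trans (hbd s hs).2)
  have hsub : ∀ {d e : ℝ}, s ≤ d → e ≤ t → Set.Ioc d e ⊆ I := fun hd he =>
    Set.Ioc_subset_Icc_self.trans ((Set.Icc_subset_Icc hd he).trans (hIc.out hs ht))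
  have hcaus := (wpCausal_iff hmin hlow (hsub le_rfl le_rfl)).mp hxy
  obtain ⟨z, hxz, hzy⟩ := hX.exists_dist_le_of_dist_le_add (A := warpedTime f s c)
    (B := warpedTime f c t) ENNReal.toReal_nonneg ENNReal.toReal_nonneg (hcaus.2.trans_eq (warpedTime_add hmin hlow (by linarith) hct
      (hsub le_rfl le_rfl))) (mul_pos (inv_pos.mpr hfmax) (sub_pos.mpr hc'c))
  refine ⟨z, (wpCausal_iff hmin hlow (hsub le_rfl hct)).mpr ⟨by linarith, hxz⟩,
    (wpCausal_iff hmin hlow (hsub hsc' le_rfl)).mpr ⟨by linarith, ?_⟩⟩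
  rw [warpedTime_add hmin hlow hc'c.le hct (hsub hsc' le_rfl)]
  linarith [le_warpedTime hmin hbd hc'c.le (hsub hsc' hct)]

theorem exists_split_of_wpCausal (hX : HasApproxMidpoints X) (hIc : I.OrdConnected)
    (hmin : 0 < fmin) (hbd : ∀ t ∈ I, fmin ≤ f t ∧ f t ≤ fmax) {a b : ℝ × X}
    (ha : a.1 ∈ I) (hb : b.1 ∈ I) (hab : WPCausal f a b) {θ ε : ℝ} (hθ0 : 0 ≤ θ)
    (hθ : θ ≤ b.1 - a.1) (hε : 0 < ε) :
    ∃ m : ℝ × X, m.1 ∈ I ∧ nullDist I f a m ≤ θ + ε ∧ nullDist I f m b ≤ b.1 - a.1 - θ + ε := by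
  obtain ⟨s, x⟩ := a
  obtain ⟨t, y⟩ := b
  dsimp only at ha hb hθ ⊢
  have hmem : ∀ {c : ℝ}, s ≤ c → c ≤ t → c ∈ I := fun hc hc' => hIc.out ha hb ⟨hc, hc'⟩
  have hmid : s + θ ∈ I := hmem (by linarith) (by linarith)
  rcases lt_or_ge θ (ε / 2) with hθε | hθε
  · refine ⟨(s + θ, x), hmid, ?_, ?_⟩
    · have := nullDist_le_of_mem (abs_sub_mem_nullLengths_of_snd_eq (f := f) ha hmid x)
      rw [add_sub_cancel_left, abs_of_nonneg hθ0] at this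
      linarith
    · have := nullDist_le_of_mem (add_mem_nullLengths
        (abs_sub_mem_nullLengths_of_snd_eq (f := f) hmid ha x)
        (abs_sub_mem_nullLengths ha hb (Or.inl hab)))
      rw [sub_add_cancel_left, abs_neg, abs_of_nonneg hθ0, abs_of_nonneg (by linarith)] at this
      linarith
  · have hdown : s + θ - ε / 2 ∈ I := hmem (by linarith) (by linarith)
    obtain ⟨z, h₁, h₂⟩ := exists_wpCausal_wpCausal hX hIc hmin hbd ha hb
      (c' := s + θ - ε / 2) (c := s + θ) (by linarith) (by linarith) (by linarith) hab
    refine ⟨(s + θ, z), hmid, ?_, ?_⟩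
    · have := nullDist_le_abs_sub ha hmid (Or.inl h₁)
      rw [add_sub_cancel_left, abs_of_nonneg hθ0] at this
      linarith
    · have := nullDist_le_of_mem (add_mem_nullLengths
        (abs_sub_mem_nullLengths_of_snd_eq (f := f) hmid hdown z)
        (abs_sub_mem_nullLengths hdown hb (Or.inl h₂)))
      rw [sub_sub_cancel_left, abs_neg, abs_of_pos (half_pos hε),
        abs_of_nonneg (by linarith)] at this
      linarith

theorem exists_split_segment (hX : HasApproxMidpoints X) (hIc : I.OrdConnected)
    (hmin : 0 < fmin) (hbd : ∀ t ∈ I, fmin ≤ f t ∧ f t ≤ fmax) {a b : ℝ × X}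
    (ha : a.1 ∈ I) (hb : b.1 ∈ I) (hab : WPCausal f a b ∨ WPCausal f b a) {θ ε : ℝ}
    (hθ0 : 0 ≤ θ) (hθ : θ ≤ |b.1 - a.1|) (hε : 0 < ε) :
    ∃ m : ℝ × X, m.1 ∈ I ∧ nullDist I f a m ≤ θ + ε ∧
      nullDist I f m b ≤ |b.1 - a.1| - θ + ε := by
  rcases hab with hab | hba
  · rw [abs_of_nonneg (sub_nonneg.mpr hab.1)] at hθ ⊢
    exact exists_split_of_wpCausal hX hIc hmin hbd ha hb hab hθ0 hθ hε
  · rw [abs_sub_comm, abs_of_nonneg (sub_nonneg.mpr hba.1)] at hθ ⊢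
    obtain ⟨m, hm, hbm, hma⟩ := exists_split_of_wpCausal hX hIc hmin hbd hb ha hba
      (θ := a.1 - b.1 - θ) (by linarith) (by linarith) hε
    refine ⟨m, hm, ?_, ?_⟩
    · rw [nullDist_comm]
      linarith
    · rw [nullDist_comm]
      linarith

theorem nullDist_le_sum_Ico
    (hconn : ∀ p q : ℝ × X, p.1 ∈ I → q.1 ∈ I → (nullLengths I f p q).Nonempty)
    {p q : ℝ × X} {n : ℕ} {σ : ℕ → ℝ × X} (hσ : WPChain I f p q n σ) {i k : ℕ} (hik : i ≤ k)
    (hk : k ≤ n + 1) :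
    nullDist I f (σ i) (σ k) ≤ ∑ l ∈ Finset.Ico i k, |(σ (l + 1)).1 - (σ l).1| := by
  obtain ⟨-, -, hσI, hσc⟩ := hσ
  induction k, hik using Nat.le_induction with
  | base => simp [nullDist_self (hσI i hk)]
  | succ k hik ih =>
    rw [Finset.sum_Ico_succ_top hik]
    calc nullDist I f (σ i) (σ (k + 1))
        ≤ nullDist I f (σ i) (σ k) + nullDist I f (σ k) (σ (k + 1)) :=
          nullDist_triangle (hconn _ _ (hσI i (by omega)) (hσI k (by omega)))
            (hconn _ _ (hσI k (by omega)) (hσI _ hk))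
      _ ≤ _ := add_le_add (ih (by omega))
          (nullDist_le_abs_sub (hσI k (by omega)) (hσI _ hk) (hσc k (by omega)))

theorem exists_nullDist_le_half_add (hX : HasApproxMidpoints X) (hIc : I.OrdConnected)
    (hmin : 0 < fmin) (hbd : ∀ t ∈ I, fmin ≤ f t ∧ f t ≤ fmax)
    (hconn : ∀ p q : ℝ × X, p.1 ∈ I → q.1 ∈ I → (nullLengths I f p q).Nonempty)
    {p q : ℝ × X} (hp : p.1 ∈ I) (hq : q.1 ∈ I) {ε : ℝ} (hε : 0 < ε) :
    ∃ m : ℝ × X, m.1 ∈ I ∧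
      max (nullDist I f p m) (nullDist I f m q) ≤ nullDist I f p q / 2 + ε := by
  obtain ⟨L, ⟨n, σ, hσ, rfl⟩, hL⟩ := Real.lt_sInf_add_pos (hconn p q hp hq) (half_pos hε)
  set g : ℕ → ℝ := fun j => ∑ l ∈ Finset.range j, |(σ (l + 1)).1 - (σ l).1| with hg
  have hL : g (n + 1) < nullDist I f p q + ε / 2 := hL
  have hg0 : 0 ≤ g (n + 1) := Finset.sum_nonneg fun _ _ => abs_nonneg _
  obtain ⟨j, hj, hgj, hgj1⟩ := exists_le_le_succ (g := g) (s := g (n + 1) / 2) (N := n)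
    (by simp [hg]; positivity) (by linarith)
  have hsucc : g (j + 1) = g j + |(σ (j + 1)).1 - (σ j).1| := Finset.sum_range_succ _ _
  have hσI := hσ.2.2.1
  have hσc := hσ.2.2.2
  obtain ⟨m, hmI, hm₁, hm₂⟩ := exists_split_segment hX hIc hmin hbd (hσI j (by omega))
    (hσI _ (by omega)) (hσc j hj) (θ := g (n + 1) / 2 - g j) (by linarith) (by linarith)
    (half_pos hε)
  have hpre : nullDist I f p (σ j) ≤ g j := by
    have := nullDist_le_sum_Ico hconn hσ (Nat.zero_le j) (by omega)
    rwa [hσ.1, ← Finset.range_eq_Ico] at this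
  have hsuf : nullDist I f (σ (j + 1)) q ≤ g (n + 1) - g (j + 1) := by
    simp only [hg]
    rw [← Finset.sum_range_add_sum_Ico _ (by omega : j + 1 ≤ n + 1), add_sub_cancel_left,
      ← hσ.2.1]
    exact nullDist_le_sum_Ico hconn hσ (by omega) le_rfl
  have h₁ := nullDist_triangle (hconn _ _ hp (hσI j (by omega))) (hconn _ _ (hσI j (by omega)) hmI)
  have h₂ := nullDist_triangle (hconn _ _ hmI (hσI (j + 1) (by omega)))
    (hconn _ _ (hσI (j + 1) (by omega)) hq)
  exact ⟨m, hmI, max_le (by linarith) (by linarith)⟩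

end LengthSpace

theorem stmt0_general {X : Type*} [MetricSpace X]
    (hX : ∀ x y : X, ∀ ε : ℝ, 0 < ε →
      ∃ z : X, max (dist x z) (dist z y) ≤ dist x y / 2 + ε)
    (I : Set ℝ) (hIc : I.OrdConnected) (hInd : ∃ a ∈ I, ∃ b ∈ I, a < b)
    (f : ℝ → ℝ)
    (fmin fmax : ℝ) (hmin : 0 < fmin)
    (hbd : ∀ t ∈ I, fmin ≤ f t ∧ f t ≤ fmax) :
    (∀ p q : ℝ × X, p.1 ∈ I → q.1 ∈ I → 0 ≤ nullDist I f p q) ∧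
    (∀ p q : ℝ × X, p.1 ∈ I → q.1 ∈ I → (nullDist I f p q = 0 ↔ p = q)) ∧
    (∀ p q : ℝ × X, p.1 ∈ I → q.1 ∈ I → nullDist I f p q = nullDist I f q p) ∧
    (∀ p q r : ℝ × X, p.1 ∈ I → q.1 ∈ I → r.1 ∈ I →
      nullDist I f p r ≤ nullDist I f p q + nullDist I f q r) ∧
    (∀ p q : ℝ × X, p.1 ∈ I → q.1 ∈ I → ∀ ε : ℝ, 0 < ε →
      ∃ m : ℝ × X, m.1 ∈ I ∧
        max (nullDist I f p m) (nullDist I f m q) ≤ nullDist I f p q / 2 + ε) := by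
  have hconn : ∀ p q : ℝ × X, p.1 ∈ I → q.1 ∈ I → (nullLengths I f p q).Nonempty :=
    fun p q hp hq => nullLengths_nonempty hX hIc hInd hmin hbd hp hq
  have hlow : ∀ t ∈ I, fmin ≤ f t := fun t ht => (hbd t ht).1
  refine ⟨fun p q _ _ => nullDist_nonneg p q, fun p q hp hq => ⟨?_, ?_⟩,
    fun p q _ _ => nullDist_comm p q,
    fun p q r hp hq hr => nullDist_triangle (hconn p q hp hq) (hconn q r hq hr),
    fun p q hp hq ε hε => exists_nullDist_le_half_add hX hIc hmin hbd hconn hp hq hε⟩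
  · exact eq_of_nullDist_eq_zero hIc hmin hlow (hconn p q hp hq)
  · rintro rfl
    exact nullDist_self hp

/-- for a length space `X`, a nondegenerate interval `I` and a continuous
warping function `f` with `0 < fmin ≤ f ≤ fmax` on `I`, the null distance of the warped
product `I ×_f X` is a metric and `(I × X, d̂_f)` is a length space (approximate midpoints). -/
theorem stmt0 {X : Type*} [MetricSpace X]
    (hX : ∀ x y : X, ∀ ε : ℝ, 0 < ε →
      ∃ z : X, max (dist x z) (dist z y) ≤ dist x y / 2 + ε)
    (I : Set ℝ) (hIc : I.OrdConnected) (hInd : ∃ a ∈ I, ∃ b ∈ I, a < b)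
    (f : ℝ → ℝ) (hf : ContinuousOn f I)
    (fmin fmax : ℝ) (hmin : 0 < fmin)
    (hbd : ∀ t ∈ I, fmin ≤ f t ∧ f t ≤ fmax) :
    (∀ p q : ℝ × X, p.1 ∈ I → q.1 ∈ I → 0 ≤ nullDist I f p q) ∧
    (∀ p q : ℝ × X, p.1 ∈ I → q.1 ∈ I → (nullDist I f p q = 0 ↔ p = q)) ∧
    (∀ p q : ℝ × X, p.1 ∈ I → q.1 ∈ I → nullDist I f p q = nullDist I f q p) ∧
    (∀ p q r : ℝ × X, p.1 ∈ I → q.1 ∈ I → r.1 ∈ I →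
      nullDist I f p r ≤ nullDist I f p q + nullDist I f q r) ∧
    (∀ p q : ℝ × X, p.1 ∈ I → q.1 ∈ I → ∀ ε : ℝ, 0 < ε →
      ∃ m : ℝ × X, m.1 ∈ I ∧
        max (nullDist I f p m) (nullDist I f m q) ≤ nullDist I f p q / 2 + ε) :=
  stmt0_general hX I hIc hInd f fmin fmax hmin hbd
end

section
/- Let X be a length space, I ⊆ ℝ a closed nondegenerate interval, and f : I → ℝ measurable with 0 < f_min ≤ f(t) ≤ f_max < ∞ for all t ∈ I. Then for all p, q ∈ I × X: min{1, f_min} · d̂_σ(p,q) ≤ d̂_f(p,q) ≤ max{1, f_max} · d̂_σ(p,q), where d̂_f is the null distance of the warped product I ×_f X and d̂_σ is the null distance of the Lorentzian product I × X (warping function f ≡ 1). -/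
open MeasureTheory

/-!
For a constant warping factor `c > 0` the null distance is computed exactly:
`d̂_c(p, q) = max |t(q) - t(p)| (c · d(p.2, q.2))`. Every chain is at least this long by the
triangle inequality in time and in `X`. Conversely, in a length space a spatial distance `d` can be
crossed at cost `c · d + ε` by zigzagging in time through approximate midpoints around a fixed
time level (there is room for the zigzag because `I` is a nondegenerate interval), after a single
causal step that covers as much of `d` as the time difference allows.

Causality for `fmax` implies causality for `f`, which implies causality for `fmin`, so
`d̂_fmin ≤ d̂_f ≤ d̂_fmax`, and the constant case gives both bounds.
-/

open Set

def IsLengthSpace (X : Type*) [PseudoMetricSpace X] : Prop :=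
  ∀ x y : X, ∀ ε : ℝ, 0 < ε → ∃ z : X, max (dist x z) (dist z y) ≤ dist x y / 2 + ε

section LengthSpace

variable {X : Type*} [PseudoMetricSpace X]

theorem IsLengthSpace.exists_mem_le_mul_dist_add (hX : IsLengthSpace X) {S : X → X → Set ℝ}
    (hS : ∀ {x y z : X} {a b : ℝ}, a ∈ S x y → b ∈ S y z → a + b ∈ S x z)
    {c h : ℝ} (hc : 0 ≤ c) (hh : 0 < h)
    (hloc : ∀ x y, dist x y < h → ∀ ε > 0, ∃ r ∈ S x y, r ≤ c * dist x y + ε)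
    (x y : X) {ε : ℝ} (hε : 0 < ε) : ∃ r ∈ S x y, r ≤ c * dist x y + ε := by
  suffices key : ∀ N : ℕ, ∀ x y, dist x y < 2 ^ N * h →
      ∀ ε > 0, ∃ r ∈ S x y, r ≤ c * dist x y + ε by
    obtain ⟨N, hN⟩ := pow_unbounded_of_one_lt (dist x y / h) one_lt_two
    exact key N x y (by rwa [div_lt_iff₀ hh] at hN) ε hε
  intro N
  induction N with
  | zero => simpa using hloc
  | succ N ih =>
    intro x y hxy ε hε
    set d := dist x y
    set η := min ((2 ^ (N + 1) * h - d) / 4) (ε / (4 * (c + 1)))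
    have hη : 0 < η := lt_min (by linarith) (by positivity)
    have hηd : d / 2 + η < 2 ^ N * h := by
      have hη_le : η ≤ (2 ^ (N + 1) * h - d) / 4 := min_le_left _ _
      rw [pow_succ] at hxy hη_le
      linarith
    have hηε : c * η ≤ ε / 4 := calc
      c * η ≤ (c + 1) * (ε / (4 * (c + 1))) := by
        gcongr
        · linarith
        · exact min_le_right _ _
      _ = ε / 4 := by field_simp
    obtain ⟨m, hm⟩ := hX x y η hη
    have hxm := (le_max_left _ _).trans hm
    have hmy := (le_max_right _ _).trans hm
    obtain ⟨a, ha, ha_le⟩ := ih x m (by linarith) (ε / 4) (by positivity)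
    obtain ⟨b, hb, hb_le⟩ := ih m y (by linarith) (ε / 4) (by positivity)
    refine ⟨a + b, hS ha hb, ?_⟩
    have := mul_le_mul_of_nonneg_left hxm hc
    have := mul_le_mul_of_nonneg_left hmy hc
    nlinarith

theorem IsLengthSpace.exists_dist_le_dist_sub_add (hX : IsLengthSpace X) (x y : X) {s : ℝ}
    (hs₀ : 0 ≤ s) (hs : s ≤ dist x y) {ε : ℝ} (hε : 0 < ε) :
    ∃ w, dist x w ≤ s ∧ dist w y ≤ dist x y - s + ε := by
  -- `r ∈ S x y`: `dist x y ≤ r`, and for every `s ≤ r` some point is within `s` of `x` and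
  -- within `r - s + ε / 2` of `y`
  let S : X → X → Set ℝ := fun x y => {r | dist x y ≤ r ∧
    ∀ s, 0 ≤ s → s ≤ r → ∃ w, dist x w ≤ s ∧ dist w y ≤ r - s + ε / 2}
  have hS : ∀ {x y z : X} {a b : ℝ}, a ∈ S x y → b ∈ S y z → a + b ∈ S x z := by
    rintro x y z a b ⟨hxy, ha⟩ ⟨hyz, hb⟩
    refine ⟨(dist_triangle x y z).trans (add_le_add hxy hyz), fun s hs₀ hs => ?_⟩
    rcases le_total s a with hsa | has
    · obtain ⟨w, hxw, hwy⟩ := ha s hs₀ hsa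
      exact ⟨w, hxw, by linarith [dist_triangle w y z]⟩
    · obtain ⟨w, hyw, hwz⟩ := hb (s - a) (by linarith) (by linarith)
      exact ⟨w, by linarith [dist_triangle x y w], by linarith⟩
  have hloc : ∀ x y, dist x y < ε / 2 → ∀ ε > 0, ∃ r ∈ S x y, r ≤ 1 * dist x y + ε :=
    fun x y hxy ε hε =>
      ⟨dist x y, ⟨le_rfl, fun s hs₀ hs => ⟨x, by simpa using hs₀, by linarith⟩⟩,
        by linarith⟩
  obtain ⟨r, ⟨hr, hsplit⟩, hr_le⟩ :=
    hX.exists_mem_le_mul_dist_add (S := S) hS zero_le_one (half_pos hε) hloc x y (half_pos hε)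
  obtain ⟨w, hxw, hwy⟩ := hsplit s hs₀ (hs.trans hr)
  exact ⟨w, hxw, by linarith⟩

end LengthSpace

theorem Set.OrdConnected.exists_abs_sub_eq {I : Set ℝ} (hI : I.OrdConnected) {a b u v : ℝ}
    (ha : a ∈ I) (hb : b ∈ I) (hu : u ∈ I) (hv₀ : 0 ≤ v) (hv : 2 * v ≤ b - a) :
    ∃ t ∈ I, |t - u| = v := by
  by_cases hub : u + v ≤ b
  · exact ⟨u + v, hI.out hu hb ⟨by linarith, hub⟩, by simp [abs_of_nonneg hv₀]⟩
  · exact ⟨u - v, hI.out ha hu ⟨by linarith, by linarith⟩, by simp [abs_of_nonneg hv₀]⟩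

theorem min_one_mul_max_le_max_mul {a b c : ℝ} (ha : 0 ≤ a) (hb : 0 ≤ b) :
    min 1 c * max a b ≤ max a (c * b) := by
  rcases le_total a b with hab | hab <;> rcases le_total 1 c with hc | hc <;>
    simp only [max_eq_left, max_eq_right, min_eq_left, min_eq_right, hab, hc] <;>
    nlinarith [le_max_left a (c * b), le_max_right a (c * b)]

theorem max_mul_le_max_one_mul_max {a b c : ℝ} (ha : 0 ≤ a) (hb : 0 ≤ b) :
    max a (c * b) ≤ max 1 c * max a b := by
  have h1 := le_max_left 1 c
  have h2 := le_max_right 1 c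
  refine max_le ?_ ?_ <;> nlinarith [le_max_left a b, le_max_right a b]

section NullDistance

variable {X : Type*} [MetricSpace X] {I : Set ℝ} {f g : ℝ → ℝ} {c : ℝ} {p q : ℝ × X}

def chainLengths (I : Set ℝ) (f : ℝ → ℝ) (p q : ℝ × X) : Set ℝ :=
  { r | ∃ n σ, WPChain I f p q n σ ∧
    r = ∑ i ∈ Finset.range (n + 1), |(σ (i + 1)).1 - (σ i).1| }

theorem bddBelow_chainLengths : BddBelow (chainLengths I f p q) := by
  refine ⟨0, ?_⟩
  rintro r ⟨n, σ, -, rfl⟩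
  exact Finset.sum_nonneg fun i _ => abs_nonneg _

theorem nullDist_le_of_mem_chainLengths {r : ℝ} (hr : r ∈ chainLengths I f p q) :
    nullDist I f p q ≤ r :=
  csInf_le bddBelow_chainLengths hr

theorem nullDist_le_nullDist_of_subset
    (hsub : chainLengths I g p q ⊆ chainLengths I f p q) (hne : (chainLengths I g p q).Nonempty) :
    nullDist I f p q ≤ nullDist I g p q :=
  csInf_le_csInf bddBelow_chainLengths hne hsub

theorem abs_sub_mem_chainLengths (hp : p.1 ∈ I) (hq : q.1 ∈ I)
    (h : WPCausal f p q ∨ WPCausal f q p) : |q.1 - p.1| ∈ chainLengths I f p q := by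
  refine ⟨0, fun i => if i = 0 then p else q,
    ⟨rfl, rfl, fun i _ => ?_, fun i hi => ?_⟩, by simp⟩
  · dsimp only
    split_ifs
    exacts [hp, hq]
  · obtain rfl : i = 0 := Nat.le_zero.1 hi
    simpa using h

theorem add_mem_chainLengths {p m q : ℝ × X} {a b : ℝ} (ha : a ∈ chainLengths I f p m)
    (hb : b ∈ chainLengths I f m q) : a + b ∈ chainLengths I f p q := by
  obtain ⟨n, σ, ⟨hσ₀, hσ₁, hσI, hσc⟩, rfl⟩ := ha
  obtain ⟨k, τ, ⟨hτ₀, hτ₁, hτI, hτc⟩, rfl⟩ := hb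
  set ρ : ℕ → ℝ × X := fun i => if i ≤ n + 1 then σ i else τ (i - (n + 1)) with hρ
  have hρσ : ∀ i ≤ n + 1, ρ i = σ i := fun i hi => if_pos hi
  have hρτ : ∀ j, ρ (n + 1 + j) = τ j := by
    intro j
    rcases Nat.eq_zero_or_pos j with rfl | hj
    · simp [hρ, hσ₁, hτ₀]
    · simp only [hρ, if_neg (show ¬n + 1 + j ≤ n + 1 by omega), Nat.add_sub_cancel_left]
  refine ⟨n + k + 1, ρ, ⟨by simp [hρσ, hσ₀], ?_, fun i hi => ?_, fun i hi => ?_⟩, ?_⟩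
  · rw [show n + k + 1 + 1 = n + 1 + (k + 1) by ring, hρτ, hτ₁]
  · rcases le_or_gt i (n + 1) with hin | hin
    · rw [hρσ i hin]
      exact hσI i hin
    · obtain ⟨j, rfl⟩ := Nat.exists_eq_add_of_le hin.le
      rw [hρτ]
      exact hτI j (by omega)
  · rcases le_or_gt i n with hin | hin
    · rw [hρσ i (by omega), hρσ (i + 1) (by omega)]
      exact hσc i hin
    · obtain ⟨j, rfl⟩ := Nat.exists_eq_add_of_le hin
      rw [add_assoc, hρτ, hρτ]
      exact hτc j (by omega)
  · rw [show n + k + 1 + 1 = n + 1 + (k + 1) by ring, Finset.sum_range_add _ (n + 1) (k + 1)]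
    congr 1
    · refine Finset.sum_congr rfl fun i hi => ?_
      have hi := Finset.mem_range.1 hi
      rw [hρσ i (by omega), hρσ (i + 1) (by omega)]
    · refine Finset.sum_congr rfl fun j _ => ?_
      rw [add_assoc, hρτ, hρτ]

theorem WPCausal.mono (h : WPCausal g p q)
    (hgf : ∀ u ∈ Ioc p.1 q.1, (g u)⁻¹ ≤ (f u)⁻¹) :
    WPCausal f p q :=
  ⟨h.1, h.2.trans <| setLIntegral_mono' measurableSet_Ioc fun u hu =>
    ENNReal.ofReal_le_ofReal (hgf u hu)⟩

theorem chainLengths_mono (hI : I.OrdConnected) (hgf : ∀ u ∈ I, (g u)⁻¹ ≤ (f u)⁻¹) :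
    chainLengths I g p q ⊆ chainLengths I f p q := by
  rintro r ⟨n, σ, ⟨hσ₀, hσ₁, hσI, hσc⟩, rfl⟩
  have hmono : ∀ i j, i ≤ n + 1 → j ≤ n + 1 →
      WPCausal g (σ i) (σ j) → WPCausal f (σ i) (σ j) := fun i j hi hj h =>
    h.mono fun u hu => hgf u (hI.out (hσI i hi) (hσI j hj) (Ioc_subset_Icc_self hu))
  refine ⟨n, σ, ⟨hσ₀, hσ₁, hσI, fun i hi => ?_⟩, rfl⟩
  exact (hσc i hi).imp (hmono _ _ (by omega) (by omega)) (hmono _ _ (by omega) (by omega))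

theorem wpCausal_const_iff (hc : 0 < c) :
    WPCausal (fun _ => c) p q ↔ p.1 ≤ q.1 ∧ c * dist p.2 q.2 ≤ q.1 - p.1 := by
  rw [WPCausal, setLIntegral_const, Real.volume_Ioc, ← ENNReal.ofReal_mul (inv_nonneg.2 hc.le)]
  refine and_congr_right fun hpq => ?_
  rw [ENNReal.ofReal_le_ofReal_iff (mul_nonneg (inv_nonneg.2 hc.le) (sub_nonneg.2 hpq)),
    ← div_eq_inv_mul, le_div_iff₀' hc]

theorem wpCausal_const_or_iff (hc : 0 < c) :
    WPCausal (fun _ => c) p q ∨ WPCausal (fun _ => c) q p ↔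
      c * dist p.2 q.2 ≤ |q.1 - p.1| := by
  rw [wpCausal_const_iff hc, wpCausal_const_iff hc, dist_comm q.2, le_abs, neg_sub]
  have : 0 ≤ c * dist p.2 q.2 := by positivity
  constructor
  · rintro (h | h)
    exacts [Or.inl h.2, Or.inr h.2]
  · rintro (h | h)
    exacts [Or.inl ⟨by linarith, h⟩, Or.inr ⟨by linarith, h⟩]

theorem max_le_of_mem_chainLengths_const (hc : 0 < c) {r : ℝ}
    (hr : r ∈ chainLengths I (fun _ => c) p q) : max |q.1 - p.1| (c * dist p.2 q.2) ≤ r := by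
  obtain ⟨n, σ, ⟨rfl, rfl, -, hσc⟩, rfl⟩ := hr
  refine max_le ?_ ?_
  · calc |(σ (n + 1)).1 - (σ 0).1|
        = |∑ i ∈ Finset.range (n + 1), ((σ (i + 1)).1 - (σ i).1)| := by
          rw [Finset.sum_range_sub fun i => (σ i).1]
      _ ≤ _ := Finset.abs_sum_le_sum_abs _ _
  · calc c * dist (σ 0).2 (σ (n + 1)).2
        ≤ c * ∑ i ∈ Finset.range (n + 1), dist (σ i).2 (σ (i + 1)).2 :=
          mul_le_mul_of_nonneg_left (dist_le_range_sum_dist (fun i => (σ i).2) _) hc.le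
      _ = ∑ i ∈ Finset.range (n + 1), c * dist (σ i).2 (σ (i + 1)).2 := Finset.mul_sum _ _ _
      _ ≤ _ := Finset.sum_le_sum fun i hi =>
          (wpCausal_const_or_iff hc).1 (hσc i (Finset.mem_range_succ_iff.1 hi))

theorem exists_mem_chainLengths_const_mk_le_mul_dist_add (hX : IsLengthSpace X)
    (hI : I.OrdConnected) (hInd : ∃ a ∈ I, ∃ b ∈ I, a < b) (hc : 0 < c) {t : ℝ} (ht : t ∈ I)
    (x y : X) {ε : ℝ} (hε : 0 < ε) :
    ∃ r ∈ chainLengths I (fun _ => c) (t, x) (t, y), r ≤ c * dist x y + ε := by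
  obtain ⟨a, ha, b, hb, hab⟩ := hInd
  refine hX.exists_mem_le_mul_dist_add
    (S := fun x y => chainLengths I (fun _ => c) (t, x) (t, y)) add_mem_chainLengths hc.le
    (div_pos (sub_pos.2 hab) hc) ?_ x y hε
  intro x y hxy ε hε
  set d := dist x y
  have hcd : c * d < b - a := by rwa [lt_div_iff₀' hc] at hxy
  -- zigzag through an approximate midpoint `m`, at a time `t'` with `|t' - t| = τ`
  set η := min ((b - a - c * d) / (2 * c)) (ε / (2 * c))
  have hη : 0 < η := lt_min (div_pos (by linarith) (by positivity)) (by positivity)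
  have hcη₁ : c * η ≤ (b - a - c * d) / 2 := by
    rw [← le_div_iff₀' hc, div_div]
    exact min_le_left _ _
  have hcη₂ : c * η ≤ ε / 2 := by
    rw [← le_div_iff₀' hc, div_div]
    exact min_le_right _ _
  obtain ⟨m, hm⟩ := hX x y η hη
  set τ := c * (d / 2 + η)
  have hτ : 2 * τ = c * d + 2 * (c * η) := by ring
  obtain ⟨t', ht', htt'⟩ :=
    hI.exists_abs_sub_eq (v := τ) ha hb ht (by positivity) (by linarith)
  have hstep₁ : |t' - t| ∈ chainLengths I (fun _ => c) (t, x) (t', m) :=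
    abs_sub_mem_chainLengths ht ht' <| (wpCausal_const_or_iff hc).2 <| by
      rw [htt']
      exact mul_le_mul_of_nonneg_left ((le_max_left _ _).trans hm) hc.le
  have hstep₂ : |t - t'| ∈ chainLengths I (fun _ => c) (t', m) (t, y) :=
    abs_sub_mem_chainLengths ht' ht <| (wpCausal_const_or_iff hc).2 <| by
      rw [abs_sub_comm, htt']
      exact mul_le_mul_of_nonneg_left ((le_max_right _ _).trans hm) hc.le
  refine ⟨_, add_mem_chainLengths hstep₁ hstep₂, ?_⟩
  rw [abs_sub_comm t, htt']
  linarith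

theorem exists_mem_chainLengths_const_le_max_add (hX : IsLengthSpace X)
    (hI : I.OrdConnected) (hInd : ∃ a ∈ I, ∃ b ∈ I, a < b) (hc : 0 < c) (hp : p.1 ∈ I)
    (hq : q.1 ∈ I) {ε : ℝ} (hε : 0 < ε) :
    ∃ r ∈ chainLengths I (fun _ => c) p q, r ≤ max |q.1 - p.1| (c * dist p.2 q.2) + ε := by
  set T := |q.1 - p.1|
  by_cases hT : c * dist p.2 q.2 ≤ T
  · exact ⟨T, abs_sub_mem_chainLengths hp hq ((wpCausal_const_or_iff hc).2 hT),
      by linarith [le_max_left T (c * dist p.2 q.2)]⟩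
  -- go in one causal step to the time of `q`, as far towards `q.2` as causality allows,
  -- then move in space
  obtain ⟨w, hpw, hwq⟩ := hX.exists_dist_le_dist_sub_add p.2 q.2 (s := T / c) (by positivity)
    (by rw [div_le_iff₀' hc]; linarith) (div_pos hε (mul_pos two_pos hc))
  have hstep : T ∈ chainLengths I (fun _ => c) p (q.1, w) :=
    abs_sub_mem_chainLengths hp hq <| (wpCausal_const_or_iff hc).2 <| by
      rwa [← le_div_iff₀' hc]
  obtain ⟨r, hr, hr_le⟩ :=
    exists_mem_chainLengths_const_mk_le_mul_dist_add hX hI hInd hc hq w q.2 (half_pos hε)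
  refine ⟨T + r, add_mem_chainLengths hstep hr, ?_⟩
  have hcw : c * dist w q.2 ≤ c * dist p.2 q.2 - T + ε / 2 := calc
    c * dist w q.2 ≤ c * (dist p.2 q.2 - T / c + ε / (2 * c)) :=
      mul_le_mul_of_nonneg_left hwq hc.le
    _ = c * dist p.2 q.2 - T + ε / 2 := by field_simp
  linarith [le_max_right T (c * dist p.2 q.2)]

theorem nullDist_const (hX : IsLengthSpace X) (hI : I.OrdConnected)
    (hInd : ∃ a ∈ I, ∃ b ∈ I, a < b) (hc : 0 < c) (hp : p.1 ∈ I) (hq : q.1 ∈ I) :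
    nullDist I (fun _ => c) p q = max |q.1 - p.1| (c * dist p.2 q.2) := by
  refine le_antisymm (le_of_forall_pos_le_add fun ε hε => ?_) ?_
  · obtain ⟨r, hr, hr_le⟩ := exists_mem_chainLengths_const_le_max_add hX hI hInd hc hp hq hε
    exact (nullDist_le_of_mem_chainLengths hr).trans hr_le
  · obtain ⟨r, hr, -⟩ := exists_mem_chainLengths_const_le_max_add hX hI hInd hc hp hq one_pos
    exact le_csInf ⟨r, hr⟩ fun r hr => max_le_of_mem_chainLengths_const hc hr

end NullDistance

theorem stmt7_general {X : Type*} [MetricSpace X]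
    (hX : ∀ x y : X, ∀ ε : ℝ, 0 < ε →
      ∃ z : X, max (dist x z) (dist z y) ≤ dist x y / 2 + ε)
    (I : Set ℝ) (hIc : I.OrdConnected)
    (hInd : ∃ a ∈ I, ∃ b ∈ I, a < b)
    (f : ℝ → ℝ)
    (fmin fmax : ℝ) (hmin : 0 < fmin)
    (hbd : ∀ t ∈ I, fmin ≤ f t ∧ f t ≤ fmax) :
    ∀ p q : ℝ × X, p.1 ∈ I → q.1 ∈ I →
      min 1 fmin * nullDist I (fun _ => (1 : ℝ)) p q ≤ nullDist I f p q ∧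
      nullDist I f p q ≤ max 1 fmax * nullDist I (fun _ => (1 : ℝ)) p q := by
  intro p q hp hq
  have hfpos : ∀ t ∈ I, 0 < f t := fun t ht => hmin.trans_le (hbd t ht).1
  have hfmax : 0 < fmax := by
    obtain ⟨a, ha, -⟩ := hInd
    exact (hfpos a ha).trans_le (hbd a ha).2
  have hsub_min : chainLengths I f p q ⊆ chainLengths I (fun _ => fmin) p q :=
    chainLengths_mono hIc fun u hu => inv_anti₀ hmin (hbd u hu).1
  have hsub_max : chainLengths I (fun _ => fmax) p q ⊆ chainLengths I f p q :=
    chainLengths_mono hIc fun u hu => inv_anti₀ (hfpos u hu) (hbd u hu).2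
  obtain ⟨r, hr, -⟩ := exists_mem_chainLengths_const_le_max_add hX hIc hInd hfmax hp hq one_pos
  have hlow := nullDist_le_nullDist_of_subset hsub_min ⟨r, hsub_max hr⟩
  have hup := nullDist_le_nullDist_of_subset hsub_max ⟨r, hr⟩
  rw [nullDist_const hX hIc hInd hmin hp hq] at hlow
  rw [nullDist_const hX hIc hInd hfmax hp hq] at hup
  rw [nullDist_const hX hIc hInd one_pos hp hq, one_mul]
  exact ⟨(min_one_mul_max_le_max_mul (abs_nonneg _) dist_nonneg).trans hlow,
    hup.trans (max_mul_le_max_one_mul_max (abs_nonneg _) dist_nonneg)⟩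

/-- for a length space `X`, a closed nondegenerate interval `I` and a
measurable warping function with `0 < fmin ≤ f ≤ fmax` on `I`:
`min{1,fmin}·d̂_σ ≤ d̂_f ≤ max{1,fmax}·d̂_σ` on `I × X`. -/
theorem stmt7 {X : Type*} [MetricSpace X]
    (hX : ∀ x y : X, ∀ ε : ℝ, 0 < ε →
      ∃ z : X, max (dist x z) (dist z y) ≤ dist x y / 2 + ε)
    (I : Set ℝ) (hIclosed : IsClosed I) (hIc : I.OrdConnected)
    (hInd : ∃ a ∈ I, ∃ b ∈ I, a < b)
    (f : ℝ → ℝ) (hf : Measurable f)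
    (fmin fmax : ℝ) (hmin : 0 < fmin)
    (hbd : ∀ t ∈ I, fmin ≤ f t ∧ f t ≤ fmax) :
    ∀ p q : ℝ × X, p.1 ∈ I → q.1 ∈ I →
      min 1 fmin * nullDist I (fun _ => (1 : ℝ)) p q ≤ nullDist I f p q ∧
      nullDist I f p q ≤ max 1 fmax * nullDist I (fun _ => (1 : ℝ)) p q :=
  stmt7_general hX I hIc hInd f fmin fmax hmin hbd
end

section
/- Let M be a set equipped with two metrics d₁ and d₂ that induce the same topology on M, and let K ⊆ M be compact in this topology. Suppose every point p ∈ K has an open neighborhood U_p such that d₂(x,y) ≤ d₁(x,y) for all x, y ∈ U_p. Then there exists a constant C > 0 such that d₂(p,q) ≤ C · d₁(p,q) for all p, q ∈ K. -/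
/-- `d` is a metric on `X` (nonnegativity follows from these axioms). -/
def IsMetricOn {X : Type*} (d : X → X → ℝ) : Prop :=
  (∀ p q, d p q = 0 ↔ p = q) ∧ (∀ p q, d p q = d q p) ∧
    ∀ p q r, d p r ≤ d p q + d q r

/-- The metrics `d₁` and `d₂` induce the same topology on `X` (mutual ball containment). -/
def SameTopology {X : Type*} (d₁ d₂ : X → X → ℝ) : Prop :=
  ∀ p : X, ∀ ε : ℝ, 0 < ε →
    (∃ δ > 0, ∀ q, d₁ p q < δ → d₂ p q < ε) ∧
    (∃ δ > 0, ∀ q, d₂ p q < δ → d₁ p q < ε)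

/-!
In the topology of `d₁`, `K` is compact (sequential compactness suffices for pseudometrics)
and `d₂` is continuous. A Lebesgue number `ε` of the cover of `K` by the neighbourhoods on which
`d₂ ≤ d₁` handles the pairs at `d₁`-distance `< ε`; for all other pairs
`d₂ ≤ sup_{K × K} d₂ ≤ (sup_{K × K} d₂ / ε) · d₁`.
-/

open Metric

abbrev IsMetricOn.toPseudoMetricSpace {X : Type*} {d : X → X → ℝ} (hd : IsMetricOn d) :
    PseudoMetricSpace X where
  dist := d
  dist_self p := (hd.1 p p).2 rfl
  dist_comm := hd.2.1
  dist_triangle := hd.2.2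

section PseudoMetric

variable {X : Type*} [PseudoMetricSpace X]

theorem continuous_uncurry_of_forall_dist_lt_imp_lt {d : X → X → ℝ}
    (hsymm : ∀ p q, d p q = d q p) (htri : ∀ p q r, d p r ≤ d p q + d q r)
    (hd : ∀ p, ∀ ε > 0, ∃ δ > 0, ∀ q, dist p q < δ → d p q < ε) :
    Continuous (Function.uncurry d) := by
  refine continuous_iff'.2 fun ⟨x, y⟩ ε hε => ?_
  obtain ⟨δ₁, hδ₁, hx⟩ := hd x (ε / 2) (by positivity)
  obtain ⟨δ₂, hδ₂, hy⟩ := hd y (ε / 2) (by positivity)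
  filter_upwards [prod_mem_nhds (ball_mem_nhds x hδ₁) (ball_mem_nhds y hδ₂)]
    with ⟨x', y'⟩ ⟨hx', hy'⟩
  have hxx' := hx x' (by rwa [dist_comm])
  have hyy' := hy y' (by rwa [dist_comm])
  have h₁ : d x' y' ≤ d x x' + d x y' := (htri x' x y').trans_eq (by rw [hsymm x' x])
  have h₂ : d x y ≤ d x x' + d x' y := htri x x' y
  have h₃ := htri x y y'
  have h₄ : d x' y ≤ d x' y' + d y y' := (htri x' y' y).trans_eq (by rw [hsymm y' y])
  rw [Real.dist_eq, abs_sub_lt_iff]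
  simp only [Function.uncurry_apply_pair]
  constructor <;> linarith

variable {K : Set X} {f : X → X → ℝ}

theorem IsCompact.exists_forall_dist_lt_imp_le_dist (hK : IsCompact K)
    (hloc : ∀ p ∈ K, ∃ δ > 0, ∀ x y, dist p x < δ → dist p y < δ → f x y ≤ dist x y) :
    ∃ ε > 0, ∀ p ∈ K, ∀ q, dist p q < ε → f p q ≤ dist p q := by
  choose δ hδ hfδ using hloc
  obtain ⟨ε, hε, hleb⟩ := lebesgue_number_lemma_of_metric hK
    (c := fun i : K => ball i.1 (δ i.1 i.2)) (fun _ => isOpen_ball)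
    fun p hp => Set.mem_iUnion.2 ⟨⟨p, hp⟩, mem_ball_self (hδ p hp)⟩
  refine ⟨ε, hε, fun p hp q hpq => ?_⟩
  obtain ⟨⟨i, hi⟩, hsub⟩ := hleb p hp
  have hpi : dist i p < δ i hi := by rw [dist_comm]; exact hsub (mem_ball_self hε)
  have hqi : dist i q < δ i hi := by rw [dist_comm]; exact hsub (by rwa [mem_ball, dist_comm])
  exact hfδ i hi p q hpi hqi

theorem IsCompact.exists_le_mul_dist_of_locally_le (hK : IsCompact K)
    (hf : ContinuousOn (Function.uncurry f) (K ×ˢ K))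
    (hloc : ∀ p ∈ K, ∃ δ > 0, ∀ x y, dist p x < δ → dist p y < δ → f x y ≤ dist x y) :
    ∃ C > 0, ∀ p ∈ K, ∀ q ∈ K, f p q ≤ C * dist p q := by
  obtain ⟨ε, hε, hnear⟩ := hK.exists_forall_dist_lt_imp_le_dist hloc
  obtain ⟨B, hB⟩ := (hK.prod hK).bddAbove_image hf
  refine ⟨1 + |B| / ε, by positivity, fun p hp q hq => ?_⟩
  have hfB : f p q ≤ |B| := (hB ⟨(p, q), ⟨hp, hq⟩, rfl⟩).trans (le_abs_self B)
  rcases lt_or_ge (dist p q) ε with hpq | hpq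
  · calc f p q ≤ dist p q := hnear p hp q hpq
      _ ≤ (1 + |B| / ε) * dist p q := le_mul_of_one_le_left dist_nonneg (le_add_of_nonneg_right (by positivity))
  · calc f p q ≤ |B| / ε * ε := by rwa [div_mul_cancel₀ _ hε.ne']
      _ ≤ |B| / ε * dist p q := by gcongr
      _ ≤ (1 + |B| / ε) * dist p q := by gcongr; linarith

end PseudoMetric

/-- if `d₁`, `d₂` are metrics on `X` inducing the same topology, `K` is a
compact subset (sequential compactness in this common topology), and every point of `K`
has a neighborhood on which `d₂ ≤ d₁`, then there is `C > 0` with `d₂ ≤ C·d₁` on `K`. -/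
theorem stmt9 {X : Type*} (d₁ d₂ : X → X → ℝ)
    (hm₁ : IsMetricOn d₁) (hm₂ : IsMetricOn d₂)
    (htop : SameTopology d₁ d₂)
    (K : Set X)
    (hK : ∀ u : ℕ → X, (∀ n, u n ∈ K) → ∃ x ∈ K, ∃ φ : ℕ → ℕ, StrictMono φ ∧
      ∀ ε : ℝ, 0 < ε → ∃ N, ∀ n ≥ N, d₁ (u (φ n)) x < ε)
    (hloc : ∀ p ∈ K, ∃ δ > 0, ∀ x y : X, d₁ p x < δ → d₁ p y < δ → d₂ x y ≤ d₁ x y) :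
    ∃ C > 0, ∀ p ∈ K, ∀ q ∈ K, d₂ p q ≤ C * d₁ p q := by
  let _ := hm₁.toPseudoMetricSpace
  have hKc : IsCompact K := IsSeqCompact.isCompact fun u hu => by
    obtain ⟨x, hx, φ, hφ, hconv⟩ := hK u hu
    exact ⟨x, hx, φ, hφ, tendsto_atTop.2 hconv⟩
  have hd₂ : Continuous (Function.uncurry d₂) :=
    continuous_uncurry_of_forall_dist_lt_imp_lt hm₂.2.1 hm₂.2.2 fun p ε hε => (htop p ε hε).1
  exact hKc.exists_le_mul_dist_of_locally_le hd₂.continuousOn hloc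
end
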